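/- Let $1 \leq k \leq i < j \leq n-k$ and define $c_{ijk} = \sum_{r=0}^{k} (-1)^{k-r} q^{\binom{r+1}{2}+\binom{k}{2}-rk} \binom{k}{r}_q \binom{n-i-k+r}{j-i-k+r}_q$. Then, as $q \to \infty$, $c_{ijk} \binom{n-i}{j-i}_q^{-1} = 1 - q^{-(n-k-j+1)}(1+O(q^{-1}))$; in particular $c_{ijk}\binom{n-i}{j-i}_q^{-1} \to 1$. -/

import Mathlib

open Filter Asymptotics

/-- The Gaussian binomial coefficient `[a choose b]_q`, as a function of a real
variable `q`. -/
noncomputable def qbinomR (q : ℝ) (a b : ℕ) : ℝ :=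
  (∏ i ∈ Finset.range b, (q ^ (a - i) - 1)) / (∏ i ∈ Finset.range b, (q ^ (i + 1) - 1))

/-- The Gaussian binomial coefficient with integer indices, equal to `0` when `b < 0`
or `b > a`. -/
noncomputable def qbinomZ (q : ℝ) (a b : ℤ) : ℝ :=
  if 0 ≤ b ∧ b ≤ a then qbinomR q a.toNat b.toNat else 0

section Lemmas
variable {q : ℝ}

lemma den_pos (hq : 1 < q) (B : ℕ) : 0 < ∏ i ∈ Finset.range B, (q ^ (i + 1) - 1) := by
  apply Finset.prod_pos
  intro i _
  have : (1:ℝ) < q ^ (i+1) := one_lt_pow₀ hq (by omega)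
  linarith

lemma pascal_a (hq : 1 < q) {A B : ℕ} (h1 : 1 ≤ B) (h2 : B ≤ A + 1) :
    qbinomR q (A+1) B = qbinomR q A (B-1) + q^B * qbinomR q A B := by
  obtain ⟨C, rfl⟩ : ∃ C, B = C + 1 := ⟨B-1, by omega⟩
  simp only [Nat.add_sub_cancel]
  unfold qbinomR
  have hnum : ∏ i ∈ Finset.range (C+1), (q ^ (A + 1 - i) - 1)
      = (∏ i ∈ Finset.range C, (q ^ (A - i) - 1)) * (q ^ (A+1) - 1) := by
    rw [Finset.prod_range_succ']
    simp [Nat.succ_sub_succ]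
  have hP : ∏ i ∈ Finset.range (C+1), (q ^ (A - i) - 1)
      = (∏ i ∈ Finset.range C, (q ^ (A - i) - 1)) * (q ^ (A - C) - 1) := Finset.prod_range_succ _ _
  have hQ : ∏ i ∈ Finset.range (C+1), (q ^ (i+1) - 1)
      = (∏ i ∈ Finset.range C, (q ^ (i+1) - 1)) * (q ^ (C+1) - 1) := Finset.prod_range_succ _ _
  rw [hnum, hP, hQ]
  have d1 : (0:ℝ) < ∏ i ∈ Finset.range C, (q ^ (i+1) - 1) := den_pos hq C
  have d2 : (0:ℝ) < q ^ (C+1) - 1 := by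
    have : (1:ℝ) < q ^ (C+1) := one_lt_pow₀ hq (by omega)
    linarith
  have key : q^C * q^(A-C) = q^A := by rw [← pow_add]; congr 1; omega
  set p := ∏ i ∈ Finset.range C, (q ^ (A - i) - 1) with hp
  set d := ∏ i ∈ Finset.range C, (q ^ (i+1) - 1) with hd
  field_simp
  ring_nf
  linear_combination (-(p*q)) * key

lemma pascal_b (hq : 1 < q) {A B : ℕ} (h1 : 1 ≤ B) (h2 : B ≤ A + 1) :
    qbinomR q (A+1) B = qbinomR q A B + q^(A+1-B) * qbinomR q A (B-1) := by
  obtain ⟨C, rfl⟩ : ∃ C, B = C + 1 := ⟨B-1, by omega⟩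
  simp only [Nat.add_sub_cancel, Nat.succ_sub_succ]
  unfold qbinomR
  have hnum : ∏ i ∈ Finset.range (C+1), (q ^ (A + 1 - i) - 1)
      = (∏ i ∈ Finset.range C, (q ^ (A - i) - 1)) * (q ^ (A+1) - 1) := by
    rw [Finset.prod_range_succ']
    simp [Nat.succ_sub_succ]
  have hP : ∏ i ∈ Finset.range (C+1), (q ^ (A - i) - 1)
      = (∏ i ∈ Finset.range C, (q ^ (A - i) - 1)) * (q ^ (A - C) - 1) := Finset.prod_range_succ _ _
  have hQ : ∏ i ∈ Finset.range (C+1), (q ^ (i+1) - 1)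
      = (∏ i ∈ Finset.range C, (q ^ (i+1) - 1)) * (q ^ (C+1) - 1) := Finset.prod_range_succ _ _
  rw [hnum, hP, hQ]
  have d1 : (0:ℝ) < ∏ i ∈ Finset.range C, (q ^ (i+1) - 1) := den_pos hq C
  have d2 : (0:ℝ) < q ^ (C+1) - 1 := by
    have : (1:ℝ) < q ^ (C+1) := one_lt_pow₀ hq (by omega)
    linarith
  have key : q^(A-C) * q^(C+1) = q^(A+1) := by rw [← pow_add]; congr 1; omega
  set p := ∏ i ∈ Finset.range C, (q ^ (A - i) - 1) with hp
  set d := ∏ i ∈ Finset.range C, (q ^ (i+1) - 1) with hd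
  field_simp
  rw [Nat.sub_zero, ← hp, ← hd]
  have hfrac : d * (q^(C+1)-1) * q^(A-C) * p / d = (q^(C+1)-1) * q^(A-C) * p := by
    rw [div_eq_iff (ne_of_gt d1)]; ring
  rw [hfrac]
  linear_combination (-p) * key

lemma num_mul_den (hq : 1 < q) {A B : ℕ} (h : B ≤ A) :
    (∏ i ∈ Finset.range B, (q ^ (A - i) - 1)) * ∏ i ∈ Finset.range (A - B), (q ^ (i + 1) - 1)
      = ∏ i ∈ Finset.range A, (q ^ (i + 1) - 1) := by
  have h1 : ∏ i ∈ Finset.range B, (q ^ (A - i) - 1)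
      = ∏ i ∈ Finset.range B, (q ^ (A - B + i + 1) - 1) := by
    rw [← Finset.prod_range_reflect]
    apply Finset.prod_congr rfl
    intro i hi
    simp only [Finset.mem_range] at hi
    congr 2
    omega
  have h2 : ∏ i ∈ Finset.range A, (q ^ (i + 1) - 1)
      = (∏ i ∈ Finset.range (A - B), (q ^ (i + 1) - 1)) *
        ∏ i ∈ Finset.range B, (q ^ (A - B + i + 1) - 1) := by
    rw [← Finset.prod_range_add]
    have : A - B + B = A := by omega
    rw [this]
  rw [h1, h2, mul_comm]

lemma qbinomR_symm (hq : 1 < q) {A B : ℕ} (h : B ≤ A) :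
    qbinomR q A B = qbinomR q A (A - B) := by
  unfold qbinomR
  rw [div_eq_div_iff (ne_of_gt (den_pos hq B)) (ne_of_gt (den_pos hq (A-B)))]
  rw [num_mul_den hq h]
  have l2 := num_mul_den hq (show A - B ≤ A by omega)
  rw [(by omega : A - (A - B) = B)] at l2
  rw [mul_comm, ← l2]
  exact mul_comm _ _

lemma qbinomR_of_lt {a b : ℕ} (h : a < b) : qbinomR q a b = 0 := by
  unfold qbinomR
  rw [Finset.prod_eq_zero (Finset.mem_range.mpr h) (by simp)]
  simp

lemma qbinomR_zero (a : ℕ) : qbinomR q a 0 = 1 := by simp [qbinomR]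

lemma qbinomR_self (hq : 1 < q) (a : ℕ) : qbinomR q a a = 1 := by
  unfold qbinomR
  rw [div_eq_one_iff_eq (ne_of_gt (den_pos hq a))]
  rw [← Finset.prod_range_reflect]
  apply Finset.prod_congr rfl
  intro i hi
  simp only [Finset.mem_range] at hi
  congr 2
  omega

lemma qbinomZ_eq (hq : 0 < q) {a b : ℤ} (ha : 0 ≤ a) (hb : 0 ≤ b) :
    qbinomZ q a b = qbinomR q a.toNat b.toNat := by
  by_cases hba : b ≤ a
  · simp [qbinomZ, hba, hb]
  · rw [qbinomZ, if_neg (by tauto), qbinomR_of_lt (by omega)]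

lemma pascalZ (hq : 1 < q) {a : ℤ} (ha : 0 ≤ a) (b : ℤ) :
    qbinomZ q (a+1) b = qbinomZ q a (b-1) + q ^ b * qbinomZ q a b := by
  have hq0 : (0:ℝ) < q := by linarith
  rcases lt_or_ge b 0 with hb | hb
  · rw [qbinomZ, if_neg (by omega), qbinomZ, if_neg (by omega), qbinomZ, if_neg (by omega)]
    ring
  rcases lt_or_ge (a+1) b with hba | hba
  · rw [qbinomZ, if_neg (by omega), qbinomZ, if_neg (by omega), qbinomZ, if_neg (by omega)]
    ring
  rcases eq_or_lt_of_le hb with hb0 | hb1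
  · rw [← hb0]
    rw [qbinomZ_eq hq0 (by omega) le_rfl, qbinomZ_eq hq0 ha le_rfl, qbinomZ, if_neg (by omega)]
    simp [qbinomR_zero]
  · rw [qbinomZ_eq hq0 (by omega) (by omega), qbinomZ_eq hq0 ha (by omega),
      qbinomZ_eq hq0 ha (by omega)]
    have h1 : (a+1).toNat = a.toNat + 1 := by omega
    have h2 : (b-1).toNat = b.toNat - 1 := by omega
    have h3 : q ^ b = q ^ (b.toNat) := by
      rw [← zpow_natCast]
      congr 1
      omega
    rw [h1, h2, h3]
    exact pascal_a hq (by omega) (by omega)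

lemma sum_eq (hq : 1 < q) : ∀ (m : ℕ) (N t : ℤ), (m:ℤ) ≤ N →
    ∑ s ∈ Finset.range (m+1),
      ((-1:ℝ)^s * q^(s.choose 2) * qbinomR q m s * qbinomZ q (N - s) (t - s))
      = q ^ ((m:ℤ) * t) * qbinomZ q (N - m) t := by
  have hq0 : (0:ℝ) < q := by linarith
  intro m
  induction m with
  | zero => intro N t hN; simp [qbinomR_zero]
  | succ m IH =>
    intro N t hN
    rw [Finset.sum_range_succ']
    have step1 : ∑ s ∈ Finset.range (m+1),
        ((-1:ℝ)^(s+1) * q^((s+1).choose 2) * qbinomR q (m+1) (s+1) *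
          qbinomZ q (N - ↑(s+1)) (t - ↑(s+1)))
        = (∑ s ∈ Finset.range (m+1), ((-1:ℝ)^(s+1) * q^((s+1).choose 2) * qbinomR q m (s+1) *
            qbinomZ q (N - ↑(s+1)) (t - ↑(s+1))))
          + (- q^m) * ∑ s ∈ Finset.range (m+1),
            ((-1:ℝ)^s * q^(s.choose 2) * qbinomR q m s * qbinomZ q ((N-1) - s) ((t-1) - s)) := by
      rw [Finset.mul_sum, ← Finset.sum_add_distrib]
      apply Finset.sum_congr rfl
      intro s hs
      simp only [Finset.mem_range] at hs
      rw [pascal_b hq (by omega) (by omega : s+1 ≤ m+1)]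
      have e1 : m + 1 - (s+1) = m - s := by omega
      have e3 : (q:ℝ)^((s+1).choose 2) * q^(m-s) = q^(s.choose 2) * q^m := by
        rw [← pow_add, ← pow_add]
        congr 1
        have h4 : (s+1).choose 2 = s.choose 2 + s := by
          rw [Nat.choose_succ_succ]
          simp [Nat.choose_one_right]
          omega
        omega
      have e4 : N - ↑(s+1) = (N - 1) - (s:ℤ) := by push_cast; ring
      have e5 : t - ↑(s+1) = (t - 1) - (s:ℤ) := by push_cast; ring
      rw [e1, e4, e5]
      have e6 : (-1:ℝ)^(s+1) = -(-1:ℝ)^s := by ring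
      rw [e6, Nat.add_sub_cancel]
      linear_combination (-(-1:ℝ)^s * qbinomR q m s * qbinomZ q ((N-1)-s) ((t-1)-s)) * e3
    rw [step1]
    have hS1 : (∑ s ∈ Finset.range (m+1), ((-1:ℝ)^(s+1) * q^((s+1).choose 2) * qbinomR q m (s+1) *
            qbinomZ q (N - ↑(s+1)) (t - ↑(s+1))))
          + ((-1:ℝ)^0 * q^((0:ℕ).choose 2) * qbinomR q m 0 * qbinomZ q (N - (0:ℕ)) (t - (0:ℕ)))
        = ∑ s ∈ Finset.range (m+1),
          ((-1:ℝ)^s * q^(s.choose 2) * qbinomR q m s * qbinomZ q (N - s) (t - s)) := by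
      rw [← Finset.sum_range_succ' (fun s =>
        (-1:ℝ)^s * q^(s.choose 2) * qbinomR q m s * qbinomZ q (N - s) (t - s)) (m+1),
        Finset.sum_range_succ]
      simp [qbinomR_of_lt (Nat.lt_succ_self m)]
    have h0 : ((-1:ℝ)^0 * q^((0:ℕ).choose 2) * qbinomR q (m+1) 0 * qbinomZ q (N - ↑(0:ℕ)) (t - ↑(0:ℕ)))
        = ((-1:ℝ)^0 * q^((0:ℕ).choose 2) * qbinomR q m 0 * qbinomZ q (N - (0:ℕ)) (t - (0:ℕ))) := by
      rw [qbinomR_zero, qbinomR_zero]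
    rw [h0]
    rw [add_right_comm, hS1, IH N t (by omega), IH (N-1) (t-1) (by omega)]
    have hP' : qbinomZ q (N - m) t
        = qbinomZ q (N - m - 1) (t-1) + q^t * qbinomZ q (N - m - 1) t := by
      have := pascalZ hq (show (0:ℤ) ≤ N - m - 1 by omega) t
      rw [show N - (m:ℤ) - 1 + 1 = N - m by ring] at this
      exact this
    rw [hP']
    rw [show N - 1 - (m:ℤ) = N - m - 1 by ring, show N - (↑(m+1):ℤ) = N - m - 1 by push_cast; ring]
    have hz1 : q^((m:ℤ)*t) * q^t = q^((↑(m+1):ℤ)*t) := by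
      rw [← zpow_add₀ (ne_of_gt hq0)]
      congr 1
      push_cast
      ring
    have hz2 : (q:ℝ)^m * q^((m:ℤ)*(t-1)) = q^((m:ℤ)*t) := by
      rw [← zpow_natCast q m, ← zpow_add₀ (ne_of_gt hq0)]
      congr 1
      ring
    linear_combination (qbinomZ q (N - ↑m - 1) t) * hz1 - (qbinomZ q (N - ↑m - 1) (t-1)) * hz2

lemma isBigO_of_tendsto_div {f g : ℝ → ℝ} (hg : ∀ᶠ q in atTop, g q ≠ 0) {c : ℝ}
    (h : Tendsto (fun q => f q / g q) atTop (nhds c)) : f =O[atTop] g := by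
  have h1 : (fun q => f q / g q) =O[atTop] (fun _ => (1:ℝ)) := h.isBigO_one ℝ
  have h3 := h1.mul (isBigO_refl g atTop)
  simp only [one_mul] at h3
  refine h3.congr' ?_ EventuallyEq.rfl
  filter_upwards [hg] with q hq
  field_simp

lemma tendsto_ratio {a b : ℕ} (ha : 1 ≤ a) (hb : 1 ≤ b) :
    Tendsto (fun q : ℝ => ((q^a - 1)/(q^b - 1)) / (q : ℝ)^((a:ℤ) - b)) atTop
      (nhds 1) := by
  have key : Tendsto (fun q : ℝ => (1 - (q^a)⁻¹)/(1 - (q^b)⁻¹)) atTop (nhds 1) := by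
    have hA : Tendsto (fun q : ℝ => (q^a)⁻¹) atTop (nhds 0) :=
      tendsto_inv_atTop_zero.comp (tendsto_pow_atTop (show a ≠ 0 by omega))
    have hB : Tendsto (fun q : ℝ => (q^b)⁻¹) atTop (nhds 0) :=
      tendsto_inv_atTop_zero.comp (tendsto_pow_atTop (show b ≠ 0 by omega))
    have c1 : Tendsto (fun _ : ℝ => (1:ℝ)) atTop (nhds 1) := tendsto_const_nhds
    have := Tendsto.div (c1.sub hA) (c1.sub hB) (show (1:ℝ) - 0 ≠ 0 by norm_num)
    rw [sub_zero, div_one] at this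
    exact this
  refine key.congr' ?_
  filter_upwards [eventually_gt_atTop (1:ℝ)] with q hq
  have hq0 : (0:ℝ) < q := by linarith
  have hqa : (0:ℝ) < q^a - 1 := by have : (1:ℝ) < q^a := one_lt_pow₀ hq (by omega); linarith
  have hqb : (0:ℝ) < q^b - 1 := by have : (1:ℝ) < q^b := one_lt_pow₀ hq (by omega); linarith
  rw [zpow_sub₀ (ne_of_gt hq0), zpow_natCast, zpow_natCast]
  field_simp

lemma ratio_isBigO {a b : ℕ} (ha : 1 ≤ a) (hb : 1 ≤ b) :
    (fun q : ℝ => (q^a - 1)/(q^b - 1)) =O[atTop] fun q : ℝ => (q:ℝ)^((a:ℤ) - b) := by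
  refine isBigO_of_tendsto_div ?_ (tendsto_ratio ha hb)
  filter_upwards [eventually_gt_atTop (1:ℝ)] with q hq
  exact zpow_ne_zero _ (by linarith)

lemma zpow_isBigO_zpow {a b : ℤ} (hab : a ≤ b) :
    (fun q : ℝ => q ^ a) =O[atTop] fun q : ℝ => q ^ b := by
  rw [isBigO_iff]
  refine ⟨1, ?_⟩
  filter_upwards [eventually_ge_atTop (1:ℝ)] with q hq
  have h1 : q ^ a ≤ q ^ b := zpow_le_zpow_right₀ hq hab
  have h2 : (0:ℝ) < q ^ a := zpow_pos (by linarith) _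
  rw [Real.norm_eq_abs, Real.norm_eq_abs, abs_of_pos h2, abs_of_pos (zpow_pos (by linarith : (0:ℝ) < q) b)]
  linarith

lemma ratio_tendsto_zero {a b : ℕ} (ha : 1 ≤ a) (hab : a < b) :
    Tendsto (fun q : ℝ => (q^a - 1)/(q^b - 1)) atTop (nhds 0) := by
  refine (ratio_isBigO ha (by omega)).trans_tendsto ?_
  exact tendsto_zpow_atTop_zero (by omega)

lemma prod_one_sub_isBigO {m : ℕ} {f : ℕ → ℝ → ℝ} {u : ℝ → ℝ}
    (hu : u =O[atTop] (fun _ => (1:ℝ)))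
    (hf : ∀ i, i < m → (fun q => f i q - 1) =O[atTop] u) :
    (fun q => (∏ i ∈ Finset.range m, f i q) - 1) =O[atTop] u := by
  induction m with
  | zero =>
    have h0 : (fun q : ℝ => (∏ i ∈ Finset.range 0, f i q) - 1) = fun _ => 0 := by
      funext q
      simp
    rw [h0]
    exact isBigO_zero u atTop
  | succ m IH =>
    have IH' := IH (fun i hi => hf i (by omega))
    have hfm : (fun q => f m q - 1) =O[atTop] u := hf m (by omega)
    have hfm1 : (fun q => f m q) =O[atTop] (fun _ => (1:ℝ)) := by
      have h1 := (hfm.trans hu).add (isBigO_refl (fun _ => (1:ℝ)) atTop)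
      simp only [sub_add_cancel] at h1
      exact h1
    have hmul := hfm1.mul IH'
    simp only [one_mul] at hmul
    have hc := hmul.add hfm
    refine hc.congr_left ?_
    intro q
    rw [Finset.prod_range_succ]
    ring

lemma choose_aux : ∀ (r d : ℕ), (r+1).choose 2 + (r+d).choose 2 = d.choose 2 + r*(r+d) := by
  have hstep : ∀ n : ℕ, (n+1).choose 2 = n.choose 2 + n := by
    intro n
    rw [Nat.choose_succ_succ]
    simp [Nat.choose_one_right]
    omega
  intro r
  induction r with
  | zero => intro d; simp
  | succ r IH =>
    intro d
    have h1 := hstep (r+1)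
    have h2 := hstep (r+d)
    have h3 := IH d
    have h4 : r + 1 + d = (r + d) + 1 := by omega
    rw [h4]
    rw [h1, h2]
    nlinarith [h3]

end Lemmas

/-- For `1 ≤ k ≤ i < j ≤ n - k`, the coefficient
`c_{ijk} = ∑_{r=0}^{k} (-1)^{k-r} q^{C(r+1,2)+C(k,2)-rk} [k choose r]_q
  [n-i-k+r choose j-i-k+r]_q`
satisfies `c_{ijk} [n-i choose j-i]_q⁻¹ = 1 - q^{-(n-k-j+1)}(1 + O(q⁻¹))` as `q → ∞`;
in particular `c_{ijk} [n-i choose j-i]_q⁻¹ → 1`. -/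
theorem coeff_asymptotics (n i j k : ℕ) (hk : 1 ≤ k) (hki : k ≤ i) (hij : i < j)
    (hjn : j ≤ n - k) :
    (fun q : ℝ =>
        (∑ r ∈ Finset.range (k + 1),
          (-1 : ℝ) ^ (k - r) * q ^ ((((r + 1).choose 2 + k.choose 2 : ℕ) : ℤ) - r * k) *
            qbinomR q k r * qbinomZ q ((n : ℤ) - i - k + r) ((j : ℤ) - i - k + r)) *
          (qbinomR q (n - i) (j - i))⁻¹ -
        (1 - q ^ (-((n : ℤ) - k - j + 1))))
        =O[atTop] (fun q : ℝ => q ^ (-((n : ℤ) - k - j + 2))) ∧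
      Tendsto (fun q : ℝ =>
        (∑ r ∈ Finset.range (k + 1),
          (-1 : ℝ) ^ (k - r) * q ^ ((((r + 1).choose 2 + k.choose 2 : ℕ) : ℤ) - r * k) *
            qbinomR q k r * qbinomZ q ((n : ℤ) - i - k + r) ((j : ℤ) - i - k + r)) *
          (qbinomR q (n - i) (j - i))⁻¹) atTop (nhds 1) := by
  have hjk : j + k ≤ n := by omega
  set t' : ℕ := j - i with ht'
  set N' : ℕ := n - i with hN'
  set e : ℕ := n - j - k + 1 with he
  have ht1 : 1 ≤ t' := by omega
  have htN : t' + k ≤ N' := by omega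
  have he1 : 1 ≤ e := by omega
  have hNe : N' - (t' - 1) = k + e := by omega
  -- the main algebraic identity, valid for q > 1
  have hmain : ∀ q : ℝ, 1 < q →
      (∑ r ∈ Finset.range (k + 1),
          (-1 : ℝ) ^ (k - r) * q ^ ((((r + 1).choose 2 + k.choose 2 : ℕ) : ℤ) - r * k) *
            qbinomR q k r * qbinomZ q ((n : ℤ) - i - k + r) ((j : ℤ) - i - k + r)) *
          (qbinomR q N' t')⁻¹
        = ∏ i' ∈ Finset.range t', (1 - (q ^ k - 1) / (q ^ (N' - i') - 1)) := by
    intro q hq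
    have hq0 : (0:ℝ) < q := by linarith
    have hsum : (∑ r ∈ Finset.range (k + 1),
          (-1 : ℝ) ^ (k - r) * q ^ ((((r + 1).choose 2 + k.choose 2 : ℕ) : ℤ) - r * k) *
            qbinomR q k r * qbinomZ q ((n : ℤ) - i - k + r) ((j : ℤ) - i - k + r))
        = ∑ s ∈ Finset.range (k + 1),
          ((-1:ℝ)^s * q^(s.choose 2) * qbinomR q k s *
            qbinomZ q (((n:ℤ) - i) - s) (((j:ℤ) - i) - s)) := by
      rw [← Finset.sum_range_reflect]
      apply Finset.sum_congr rfl
      intro s hs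
      simp only [Finset.mem_range, Nat.add_sub_cancel] at hs ⊢
      have hsk : s ≤ k := by omega
      have h1 : k - (k - s) = s := by omega
      have h2 : qbinomR q k (k - s) = qbinomR q k s := by
        rw [qbinomR_symm hq (by omega : k - s ≤ k), h1]
      have h3 : (n:ℤ) - i - k + ↑(k - s) = ((n:ℤ) - i) - s := by
        push_cast [Nat.cast_sub hsk]
        ring
      have h4 : (j:ℤ) - i - k + ↑(k - s) = ((j:ℤ) - i) - s := by
        push_cast [Nat.cast_sub hsk]
        ring
      have h5 : q ^ ((((k - s + 1).choose 2 + k.choose 2 : ℕ) : ℤ) - ↑(k - s) * ↑k)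
          = q ^ (s.choose 2) := by
        have hc := choose_aux (k - s) s
        rw [(by omega : k - s + s = k)] at hc
        have hz : (((k - s + 1).choose 2 + k.choose 2 : ℕ) : ℤ) - ↑(k - s) * ↑k
            = ((s.choose 2 : ℕ) : ℤ) := by
          have hc' : ((k - s + 1).choose 2 : ℤ) + (k.choose 2 : ℤ)
              = (s.choose 2 : ℤ) + ((k - s : ℕ) : ℤ) * k := by exact_mod_cast congrArg (Nat.cast (R := ℤ)) hc
          push_cast at hc' ⊢
          linarith
        rw [hz, zpow_natCast]
      rw [h1, h2, h3, h4, h5]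
    rw [hsum]
    rw [sum_eq hq k ((n:ℤ) - i) ((j:ℤ) - i) (by omega)]
    have hb : qbinomZ q ((n:ℤ) - i - k) ((j:ℤ) - i) = qbinomR q (N' - k) t' := by
      rw [qbinomZ_eq hq0 (by omega) (by omega)]
      congr 1
      · omega
      · omega
    have hexp : q ^ ((k:ℤ) * ((j:ℤ) - i)) = q ^ (k * t') := by
      rw [show (k:ℤ) * ((j:ℤ) - i) = ((k * t' : ℕ) : ℤ) by push_cast [Nat.cast_sub hij.le, ht']; ring,
        zpow_natCast]
    rw [hb, hexp]
    -- now prove the product identity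
    have hDpos : (0:ℝ) < ∏ i' ∈ Finset.range t', (q ^ (i' + 1) - 1) := den_pos hq t'
    have hPbpos : (0:ℝ) < ∏ i' ∈ Finset.range t', (q ^ (N' - i') - 1) := by
      apply Finset.prod_pos
      intro i' hi'
      simp only [Finset.mem_range] at hi'
      have : (1:ℝ) < q ^ (N' - i') := one_lt_pow₀ hq (by omega)
      linarith
    have hfactor : ∀ i' ∈ Finset.range t',
        (1 - (q ^ k - 1) / (q ^ (N' - i') - 1))
          = q ^ k * (q ^ (N' - k - i') - 1) / (q ^ (N' - i') - 1) := by
      intro i' hi'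
      simp only [Finset.mem_range] at hi'
      have hm : (q:ℝ) ^ k * q ^ (N' - k - i') = q ^ (N' - i') := by
        rw [← pow_add]
        congr 1
        omega
      have hden : (0:ℝ) < q ^ (N' - i') - 1 := by
        have : (1:ℝ) < q ^ (N' - i') := one_lt_pow₀ hq (by omega)
        linarith
      field_simp
      linear_combination (-1 : ℝ) * hm
    rw [Finset.prod_congr rfl hfactor, Finset.prod_div_distrib, Finset.prod_mul_distrib,
      Finset.prod_const, Finset.card_range, ← pow_mul]
    unfold qbinomR
    field_simp
  -- asymptotics
  have hE1 : -((n:ℤ) - k - j + 1) = -(e:ℤ) := by omega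
  have hE2 : -((n:ℤ) - k - j + 2) = -((e:ℤ) + 1) := by omega
  simp only [hE1, hE2]
  set u : ℝ → ℝ := fun q => q ^ (-((e:ℤ) + 1)) with hu_def
  have hu1 : u =O[atTop] (fun _ : ℝ => (1:ℝ)) := by
    have h := zpow_isBigO_zpow (show -((e:ℤ)+1) ≤ 0 by omega)
    have hz : (fun q : ℝ => q ^ (0:ℤ)) = fun _ : ℝ => (1:ℝ) := by
      funext q
      exact zpow_zero q
    rwa [hz] at h
  -- the last factor
  have hglast : (fun q : ℝ => (q ^ k - 1) / (q ^ (k + e) - 1)) =O[atTop]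
      (fun q : ℝ => q ^ (-(e:ℤ))) := by
    have h := ratio_isBigO hk (show 1 ≤ k + e by omega)
    rw [show (k:ℤ) - ↑(k + e) = -(e:ℤ) by push_cast; ring] at h
    exact h
  have hglast0 : Tendsto (fun q : ℝ => (q ^ k - 1) / (q ^ (k + e) - 1)) atTop (nhds 0) :=
    ratio_tendsto_zero hk (by omega)
  -- q^{-e} - g_last = O(q^{-(e+1)})
  have hdiff : (fun q : ℝ => q ^ (-(e:ℤ)) - (q ^ k - 1) / (q ^ (k + e) - 1)) =O[atTop] u := by
    have hr : (fun q : ℝ => (q ^ e - 1) / (q ^ (k + e) - 1)) =O[atTop]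
        (fun q : ℝ => q ^ (-(k:ℤ))) := by
      have h := ratio_isBigO he1 (show 1 ≤ k + e by omega)
      rw [show (e:ℤ) - ↑(k + e) = -(k:ℤ) by push_cast; ring] at h
      exact h
    have hmul := (isBigO_refl (fun q : ℝ => q ^ (-(e:ℤ))) atTop).mul hr
    have hmul2 : (fun q : ℝ => q ^ (-(e:ℤ)) * ((q ^ e - 1) / (q ^ (k + e) - 1))) =O[atTop]
        (fun q : ℝ => q ^ (-(e:ℤ) + -(k:ℤ))) := by
      refine hmul.trans (IsBigO.of_bound 1 ?_)
      filter_upwards [eventually_gt_atTop (0:ℝ)] with q hq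
      rw [zpow_add₀ (ne_of_gt hq)]
      simp
    have hfin := hmul2.trans (zpow_isBigO_zpow (show -(e:ℤ) + -(k:ℤ) ≤ -((e:ℤ)+1) by omega))
    refine hfin.congr' ?_ EventuallyEq.rfl
    filter_upwards [eventually_gt_atTop (1:ℝ)] with q hq
    have hq0 : (0:ℝ) < q := by linarith
    have hden : (0:ℝ) < q ^ (k + e) - 1 := by
      have : (1:ℝ) < q ^ (k + e) := one_lt_pow₀ hq (by omega)
      linarith
    have hze : (q:ℝ) ^ (-(e:ℤ)) = (q ^ e)⁻¹ := by
      rw [zpow_neg, zpow_natCast]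
    have hpe : (0:ℝ) < q ^ e := pow_pos hq0 e
    have hke : (q:ℝ) ^ k * q ^ e = q ^ (k + e) := by rw [← pow_add]
    rw [hze]
    field_simp
    linear_combination (q ^ e - 1) * hke
  -- the product over the first t'-1 factors
  have hP : (fun q : ℝ => (∏ i' ∈ Finset.range (t' - 1),
      (1 - (q ^ k - 1) / (q ^ (N' - i') - 1))) - 1) =O[atTop] u := by
    apply prod_one_sub_isBigO hu1
    intro i' hi'
    have hgi : (fun q : ℝ => (q ^ k - 1) / (q ^ (N' - i') - 1)) =O[atTop] u := by
      have h := ratio_isBigO hk (show 1 ≤ N' - i' by omega)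
      refine h.trans (zpow_isBigO_zpow ?_)
      have : k + e + 1 ≤ N' - i' := by omega
      omega
    refine hgi.neg_left.congr_left ?_
    intro q
    ring
  -- split off the last factor
  obtain ⟨m, hm⟩ : ∃ m, t' = m + 1 := ⟨t' - 1, by omega⟩
  have hNm : N' - m = k + e := by omega
  have hPm : (fun q : ℝ => (∏ i' ∈ Finset.range m,
      (1 - (q ^ k - 1) / (q ^ (N' - i') - 1))) - 1) =O[atTop] u := by
    rw [show m = t' - 1 by omega]
    exact hP
  have c1 : Tendsto (fun _ : ℝ => (1:ℝ)) atTop (nhds 1) := tendsto_const_nhds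
  have h1mg : (fun q : ℝ => 1 - (q ^ k - 1) / (q ^ (k + e) - 1)) =O[atTop]
      (fun _ : ℝ => (1:ℝ)) := (c1.sub hglast0).isBigO_one ℝ
  have hmulP := hPm.mul h1mg
  simp only [mul_one] at hmulP
  have hcomb0 := hmulP.add hdiff
  have hcomb : (fun q : ℝ => (∏ i' ∈ Finset.range t',
      (1 - (q ^ k - 1) / (q ^ (N' - i') - 1))) - (1 - q ^ (-(e:ℤ)))) =O[atTop] u := by
    refine hcomb0.congr_left ?_
    intro q
    rw [hm, Finset.prod_range_succ, hNm]
    ring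
  have hfirst : (fun q : ℝ =>
      (∑ r ∈ Finset.range (k + 1),
          (-1 : ℝ) ^ (k - r) * q ^ ((((r + 1).choose 2 + k.choose 2 : ℕ) : ℤ) - r * k) *
            qbinomR q k r * qbinomZ q ((n : ℤ) - i - k + r) ((j : ℤ) - i - k + r)) *
          (qbinomR q N' t')⁻¹ - (1 - q ^ (-(e:ℤ)))) =O[atTop] u := by
    refine hcomb.congr' ?_ EventuallyEq.rfl
    filter_upwards [eventually_gt_atTop (1:ℝ)] with q hq
    rw [hmain q hq]
  constructor
  · exact hfirst
  · have h0 : Tendsto (fun q : ℝ =>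
        (∑ r ∈ Finset.range (k + 1),
          (-1 : ℝ) ^ (k - r) * q ^ ((((r + 1).choose 2 + k.choose 2 : ℕ) : ℤ) - r * k) *
            qbinomR q k r * qbinomZ q ((n : ℤ) - i - k + r) ((j : ℤ) - i - k + r)) *
          (qbinomR q N' t')⁻¹ - (1 - q ^ (-(e:ℤ)))) atTop (nhds 0) :=
      hfirst.trans_tendsto (tendsto_zpow_atTop_zero (by omega))
    have h2 : Tendsto (fun q : ℝ => 1 - q ^ (-(e:ℤ))) atTop (nhds 1) := by
      have hz : Tendsto (fun q : ℝ => q ^ (-(e:ℤ))) atTop (nhds 0) :=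
        tendsto_zpow_atTop_zero (show -(e:ℤ) < 0 by omega)
      have h3 := c1.sub hz
      simpa using h3
    have h4 := h0.add h2
    rw [zero_add] at h4
    refine h4.congr ?_
    intro q
    ring
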